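/- Suppose V ⊆ ℝ^d is a linear subspace of dimension k ≤ d and A ⊆ 𝕊^{d−1} ∩ V is a compact set with the property that 𝕊^{d−1} ∩ V ⊆ ⋃_{v∈A} closure(S^+(v)). Then there exist vectors v¹, …, vⁿ ∈ A and a linear subspace Ṽ ⊆ V of dimension < k such that (𝕊^{d−1} ∩ V) \ ⋃_{i=1}^n S^+(vⁱ) ⊆ Ṽ. -/

import Mathlib

/-! The covering hypothesis says that no nonzero `w ∈ V` has `⟪a, w⟫ < 0` for every `a ∈ A`.
Since the convex hull of the compact set `A` is compact (Carathéodory), separating it from `0`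
inside `V` is therefore impossible, so `0 = ∑ cᵢ • vᵢ` with `vᵢ ∈ A` and all `cᵢ > 0`.
A unit vector `x ∈ V` outside every `S⁺(vᵢ)` has `⟪vᵢ, x⟫ ≤ 0` for all `i`, and pairing the
relation with `x` forces `⟪vᵢ, x⟫ = 0`; hence one may take `Ṽ = V ∩ v₁ᗮ`. -/

open scoped RealInnerProductSpace

noncomputable section

abbrev E (d : ℕ) : Type := EuclideanSpace ℝ (Fin d)

/-- `S^+(v) = {w ∈ 𝕊^{d-1} : ⟨v,w⟩ > 0}`. -/
def Splus {d : ℕ} (v : E d) : Set (E d) := {w | ‖w‖ = 1 ∧ 0 < ⟪v, w⟫}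

section ConvexHull

variable {F : Type*} [AddCommGroup F] [Module ℝ F] [FiniteDimensional ℝ F]

theorem exists_fin_pos_convex_span_of_mem_convexHull {s : Set F} {x : F}
    (hx : x ∈ convexHull ℝ s) :
    ∃ (m : ℕ) (z : Fin m → F) (w : Fin m → ℝ), m ≤ Module.finrank ℝ F + 1 ∧
      (∀ i, z i ∈ s) ∧ (∀ i, 0 < w i) ∧ ∑ i, w i = 1 ∧ ∑ i, w i • z i = x := by
  obtain ⟨ι, _, z, w, hzs, hz, hw0, hw1, hwz⟩ := eq_pos_convex_span_of_mem_convexHull hx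
  let e := (Fintype.equivFin ι).symm
  refine ⟨Fintype.card ι, z ∘ e, w ∘ e,
    hz.card_le_finrank_succ.trans (by grw [Submodule.finrank_le]),
    fun i => hzs ⟨e i, rfl⟩, fun i => hw0 (e i), ?_, ?_⟩
  · rw [← hw1]; exact e.sum_comp w
  · rw [← hwz]; exact e.sum_comp fun i => w i • z i

variable [TopologicalSpace F] [IsTopologicalAddGroup F] [ContinuousSMul ℝ F]

theorem IsCompact.convexHull {s : Set F} (hs : IsCompact s) : IsCompact (convexHull ℝ s) := by
  have hcarath : _root_.convexHull ℝ s = ⋃ m : Fin (Module.finrank ℝ F + 2),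
      (fun p : (Fin m → ℝ) × (Fin m → F) => ∑ i, p.1 i • p.2 i) ''
        (stdSimplex ℝ (Fin m) ×ˢ Set.univ.pi fun _ => s) := by
    refine subset_antisymm (fun x hx => ?_) (Set.iUnion_subset fun m => ?_)
    · obtain ⟨m, z, w, hm, hzs, hw0, hw1, rfl⟩ := exists_fin_pos_convex_span_of_mem_convexHull hx
      exact Set.mem_iUnion.2 ⟨⟨m, by omega⟩,
        (w, z), ⟨⟨fun i => (hw0 i).le, hw1⟩, fun i _ => hzs i⟩, rfl⟩
    · rintro _ ⟨⟨w, z⟩, ⟨⟨hw0, hw1⟩, hzs⟩, rfl⟩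
      exact (convex_convexHull ℝ s).sum_mem (fun i _ => hw0 i) hw1
        fun i _ => subset_convexHull ℝ s (hzs i (Set.mem_univ i))
  rw [hcarath]
  exact isCompact_iUnion fun m => ((isCompact_stdSimplex ℝ _).prod
    (isCompact_univ_pi fun _ => hs)).image (by fun_prop)

end ConvexHull

section InnerProductSpace

variable {F : Type*} [NormedAddCommGroup F] [InnerProductSpace ℝ F]

theorem inner_eq_zero_of_sum_smul_eq_zero {ι : Type*} [Fintype ι] {z : ι → F} {w : ι → ℝ}
    (hw : ∀ i, 0 < w i) (hwz : ∑ i, w i • z i = 0) {x : F} (hx : ∀ i, ⟪z i, x⟫ ≤ 0) (i : ι) :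
    ⟪z i, x⟫ = 0 := by
  have hsum : ∑ j, w j * ⟪z j, x⟫ = 0 := by
    simp_rw [← real_inner_smul_left, ← sum_inner, hwz, inner_zero_left]
  have hterm := (Finset.sum_eq_zero_iff_of_nonpos fun j _ =>
    mul_nonpos_of_nonneg_of_nonpos (hw j).le (hx j)).1 hsum i (Finset.mem_univ i)
  exact (mul_eq_zero.1 hterm).resolve_left (hw i).ne'

theorem finrank_inf_orthogonal_singleton_lt {V : Submodule ℝ F} [FiniteDimensional ℝ V]
    {a : F} (haV : a ∈ V) (ha : a ≠ 0) :
    Module.finrank ℝ ↥(V ⊓ (ℝ ∙ a)ᗮ) < Module.finrank ℝ V := by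
  refine Submodule.finrank_lt_finrank_of_lt (inf_le_left.lt_of_ne fun h => ha ?_)
  have : a ∈ (ℝ ∙ a)ᗮ := (h.symm ▸ haV : a ∈ V ⊓ (ℝ ∙ a)ᗮ).2
  exact inner_self_eq_zero.1 (Submodule.mem_orthogonal_singleton_iff_inner_right.1 this)

theorem zero_mem_convexHull_of_forall_exists_inner_nonneg [FiniteDimensional ℝ F]
    {V : Submodule ℝ F} {A : Set F} (hA : IsCompact A) (hAne : A.Nonempty) (hAV : A ⊆ V)
    (h : ∀ w ∈ V, w ≠ 0 → ∃ a ∈ A, 0 ≤ ⟪a, w⟫) : (0 : F) ∈ convexHull ℝ A := by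
  by_contra h0
  obtain ⟨f, u, hfA, hu⟩ := geometric_hahn_banach_closed_point (convex_convexHull ℝ A)
    hA.convexHull.isClosed h0
  set y := V.starProjection ((InnerProductSpace.toDual ℝ F).symm f)
  have hyA : ∀ a ∈ A, ⟪a, y⟫ < 0 := fun a ha => by
    rw [real_inner_comm, Submodule.inner_starProjection_left_eq_right,
      Submodule.starProjection_eq_self_iff.2 (hAV ha), InnerProductSpace.toDual_symm_apply]
    exact (hfA a (subset_convexHull ℝ A ha)).trans (by simpa using hu)
  obtain ⟨a₀, ha₀⟩ := hAne
  have hy0 : y ≠ 0 := fun hy => by simpa [hy] using hyA a₀ ha₀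
  obtain ⟨a, ha, hay⟩ := h y (V.starProjection_apply_mem _) hy0
  exact (hay.trans_lt (hyA a ha)).false

end InnerProductSpace

theorem closure_Splus_subset {d : ℕ} (v : E d) : closure (Splus v) ⊆ {u | 0 ≤ ⟪v, u⟫} :=
  closure_minimal (fun _ hu => hu.2.le) (isClosed_le continuous_const (by fun_prop))

theorem exists_inner_nonneg_of_sphere_subset_iUnion_closure_Splus {d : ℕ}
    {V : Submodule ℝ (E d)} {A : Set (E d)}
    (hcov : Metric.sphere (0 : E d) 1 ∩ (V : Set (E d)) ⊆ ⋃ v ∈ A, closure (Splus v))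
    {w : E d} (hwV : w ∈ V) (hw : w ≠ 0) : ∃ a ∈ A, 0 ≤ ⟪a, w⟫ := by
  have hunit : ‖w‖⁻¹ • w ∈ Metric.sphere (0 : E d) 1 ∩ (V : Set (E d)) :=
    ⟨by simp [norm_smul, hw], V.smul_mem _ hwV⟩
  obtain ⟨a, ha, haw⟩ := Set.mem_iUnion₂.1 (hcov hunit)
  refine ⟨a, ha, nonneg_of_mul_nonneg_right ?_ (inv_pos.2 (norm_pos_iff.2 hw))⟩
  simpa [real_inner_smul_right] using closure_Splus_subset a haw

theorem exists_finite_halfSphere_cover_general {d k : ℕ} (hk : 0 < k)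
    (V : Submodule ℝ (E d)) (hV : Module.finrank ℝ V = k)
    (A : Set (E d)) (hAc : IsCompact A)
    (hAsub : A ⊆ Metric.sphere (0 : E d) 1 ∩ (V : Set (E d)))
    (hcov : Metric.sphere (0 : E d) 1 ∩ (V : Set (E d)) ⊆ ⋃ v ∈ A, closure (Splus v)) :
    ∃ (n : ℕ) (vs : Fin n → E d) (W : Submodule ℝ (E d)),
      (∀ i, vs i ∈ A) ∧ W ≤ V ∧ Module.finrank ℝ W < k ∧
      (Metric.sphere (0 : E d) 1 ∩ (V : Set (E d))) \ (⋃ i, Splus (vs i))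
        ⊆ (W : Set (E d)) := by
  have hnonneg : ∀ w ∈ V, w ≠ 0 → ∃ a ∈ A, 0 ≤ ⟪a, w⟫ := fun _ =>
    exists_inner_nonneg_of_sphere_subset_iUnion_closure_Splus hcov
  have hAne : A.Nonempty := by
    obtain ⟨w, hwV, hw⟩ := V.exists_mem_ne_zero_of_ne_bot fun h => by
      rw [h, finrank_bot] at hV; omega
    obtain ⟨a, ha, -⟩ := hnonneg w hwV hw
    exact ⟨a, ha⟩
  obtain ⟨n, vs, c, -, hvsA, hc, hc1, hcvs⟩ := exists_fin_pos_convex_span_of_mem_convexHull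
    (zero_mem_convexHull_of_forall_exists_inner_nonneg hAc hAne
      (fun a ha => (hAsub ha).2) hnonneg)
  obtain ⟨i₀, -⟩ := Finset.nonempty_of_sum_ne_zero (hc1.trans_ne one_ne_zero)
  have hv₀ := hAsub (hvsA i₀)
  have hv₀ne : vs i₀ ≠ 0 := ne_zero_of_mem_unit_sphere ⟨_, hv₀.1⟩
  refine ⟨n, vs, V ⊓ (ℝ ∙ vs i₀)ᗮ, hvsA, inf_le_left,
    hV ▸ finrank_inf_orthogonal_singleton_lt hv₀.2 hv₀ne, ?_⟩
  rintro x ⟨⟨hx, hxV⟩, hxS⟩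
  have hxle : ∀ i, ⟪vs i, x⟫ ≤ 0 := fun i => not_lt.1 fun hpos =>
    hxS (Set.mem_iUnion.2 ⟨i, mem_sphere_zero_iff_norm.1 hx, hpos⟩)
  exact ⟨hxV, Submodule.mem_orthogonal_singleton_iff_inner_right.2
    (inner_eq_zero_of_sum_smul_eq_zero hc hcvs hxle i₀)⟩

/-- **Lemma (covering the sphere by half-spheres).** Let `V ⊆ ℝ^d` be a linear subspace
of dimension `k` (`1 ≤ k ≤ d`, the case `k = 0` being void) and `A ⊆ 𝕊^{d-1} ∩ V` a
compact set with `𝕊^{d-1} ∩ V ⊆ ⋃_{v ∈ A} closure (S^+(v))`. Then there are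
`v¹, …, vⁿ ∈ A` and a linear subspace `Ṽ ⊆ V` of dimension `< k` with
`(𝕊^{d-1} ∩ V) \ ⋃ᵢ S^+(vⁱ) ⊆ Ṽ`. -/
theorem exists_finite_halfSphere_cover {d k : ℕ} (hk : 0 < k) (hkd : k ≤ d)
    (V : Submodule ℝ (E d)) (hV : Module.finrank ℝ V = k)
    (A : Set (E d)) (hAc : IsCompact A)
    (hAsub : A ⊆ Metric.sphere (0 : E d) 1 ∩ (V : Set (E d)))
    (hcov : Metric.sphere (0 : E d) 1 ∩ (V : Set (E d)) ⊆ ⋃ v ∈ A, closure (Splus v)) :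
    ∃ (n : ℕ) (vs : Fin n → E d) (W : Submodule ℝ (E d)),
      (∀ i, vs i ∈ A) ∧ W ≤ V ∧ Module.finrank ℝ W < k ∧
      (Metric.sphere (0 : E d) 1 ∩ (V : Set (E d))) \ (⋃ i, Splus (vs i))
        ⊆ (W : Set (E d)) :=
  exists_finite_halfSphere_cover_general hk V hV A hAc hAsub hcov

end
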